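/- arXiv:1504.06448 — 3 statements merged into one kernel-verified Lean document; each statement's English description precedes it below -/
import Mathlib

section
/- For every L > 0 and η ∈ ℝ, the limit as ρ → 0⁺ of (F_L(η,ρ)² − F_{L−1}(η,ρ)·F_{L+1}(η,ρ))/F_L(η,ρ)² exists and equals 1 − C_{L−1}(η)·C_{L+1}(η)/C_L(η)² = 1 − L(2L+1)√((L+1)² + η²)/((L+1)(2L+3)√(L² + η²)). (This shows the constant in the sharp Turán inequality is best possible.) -/
/-!
The three coefficient series `𝓕_{L-1}, 𝓕_L, 𝓕_{L+1}` are dominated by geometric series, so each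
tends to its constant term `1` as `ρ → 0`. The powers of `ρ` cancel exactly in the relative
Turánian, since `ρ^L ρ^(L+2) = (ρ^(L+1))²`, which leaves `1 - C_{L-1} C_{L+1} / C_L²` in the
limit. The functional equations `Γ(z + 1) = z Γ(z)` (complex for `|Γ(L+1+iη)|`, real for
`Γ(2L+2)`) give `C_{L+1} / C_L` in closed form, and hence the value of that constant.
-/

open Real

/-- Coefficients of the power series of the normalized regular Coulomb wave function. -/
noncomputable def coulombA (L η : ℝ) : ℕ → ℝ
  | 0 => 1
  | 1 => η / (L + 1)
  | (n + 2) => (2 * η * coulombA L η (n + 1) - coulombA L η n) /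
      (((n : ℝ) + 2) * (((n : ℝ) + 2) + 2 * L + 1))

/-- The normalized regular Coulomb wave function `𝓕_L(η,ρ) = ∑ a_{L,n} ρ^n`. -/
noncomputable def coulombF (L η ρ : ℝ) : ℝ := ∑' n : ℕ, coulombA L η n * ρ ^ n

/-- The normalizing constant `C_L(η)`. -/
noncomputable def coulombC (L η : ℝ) : ℝ :=
  2 ^ L * Real.exp (-(Real.pi * η / 2)) *
    ‖Complex.Gamma ((L : ℂ) + 1 + (η : ℂ) * Complex.I)‖ / Real.Gamma (2 * L + 2)

/-- The regular Coulomb wave function `F_L(η,ρ) = C_L(η) ρ^{L+1} 𝓕_L(η,ρ)`. -/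
noncomputable def coulombRegF (L η ρ : ℝ) : ℝ := coulombC L η * ρ ^ (L + 1) * coulombF L η ρ

/-- The set of (nonzero) zeros of the Coulomb wave function. -/
def coulombZ (L η : ℝ) : Set ℝ := {ρ₀ | ρ₀ ≠ 0 ∧ coulombF L η ρ₀ = 0}

/-- `0 < ρ < x_{L,η,1}`: `ρ` is positive and below the first positive zero. -/
def belowFirstZero (L η ρ : ℝ) : Prop :=
  0 < ρ ∧ ∀ t : ℝ, 0 < t → t ≤ ρ → coulombF L η t ≠ 0

/-- The Coulomb zeta function `ζ_{s,η}(L)`. -/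
noncomputable def coulombZeta (s : ℕ) (η L : ℝ) : ℝ :=
  ∑' ρ₀ : coulombZ L η, ((ρ₀ : ℝ) ^ s)⁻¹

open Filter Topology

theorem tendsto_tsum_mul_pow_nhds_zero {a : ℕ → ℝ} {c : ℝ} (hc : 0 < c)
    (ha : ∀ n, |a n| ≤ c ^ n) :
    Tendsto (fun x => ∑' n, a n * x ^ n) (𝓝 0) (𝓝 (a 0)) := by
  obtain ⟨δ, hδ, hcδ⟩ : ∃ δ > 0, c * δ = 2⁻¹ := ⟨(2 * c)⁻¹, by positivity, by field_simp⟩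
  have hcont : ContinuousOn (fun x => ∑' n, a n * x ^ n) (Metric.ball 0 δ) := by
    refine continuousOn_tsum (u := fun n => (2⁻¹ : ℝ) ^ n)
      (fun n => (continuous_const.mul (continuous_pow n)).continuousOn)
      (summable_geometric_of_lt_one (by norm_num) (by norm_num)) fun n x hx => ?_
    have hx : |x| ≤ δ := by simpa using (Metric.mem_ball.mp hx).le
    calc ‖a n * x ^ n‖ = |a n| * |x| ^ n := by
          rw [norm_mul, norm_pow, Real.norm_eq_abs, Real.norm_eq_abs]
      _ ≤ c ^ n * δ ^ n := by gcongr; exact ha n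
      _ = (2⁻¹) ^ n := by rw [← mul_pow, hcδ]
  have hval : ∑' n, a n * (0 : ℝ) ^ n = a 0 :=
    (tsum_eq_single 0 fun n hn => by simp [hn]).trans (by simp)
  simpa [hval] using (hcont.continuousAt (Metric.ball_mem_nhds 0 hδ)).tendsto

theorem exists_abs_coulombA_le_pow {L : ℝ} (η : ℝ) (hL : -1 < L) :
    ∃ c > 0, ∀ n, |coulombA L η n| ≤ c ^ n := by
  set c := max (2 * |η| + 1) (|η| / (L + 1))
  have hc : 1 ≤ c := le_max_of_le_left (by linarith [abs_nonneg η])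
  refine ⟨c, by linarith, fun n => ?_⟩
  induction n using Nat.twoStepInduction with
  | zero => simp [coulombA]
  | one =>
    rw [coulombA, pow_one, abs_div, abs_of_pos (by linarith : 0 < L + 1)]
    exact le_max_right _ _
  | more n ih₀ ih₁ =>
    set d : ℝ := ((n : ℝ) + 2) * ((n + 2) + 2 * L + 1)
    have hd : 1 ≤ d := by nlinarith [(Nat.cast_nonneg n : (0 : ℝ) ≤ n)]
    have hpow : c ^ n ≤ c ^ (n + 1) := pow_le_pow_right₀ hc n.le_succ
    rw [coulombA, abs_div, abs_of_pos (by linarith : 0 < d), div_le_iff₀ (by linarith)]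
    calc |2 * η * coulombA L η (n + 1) - coulombA L η n|
        ≤ 2 * |η| * |coulombA L η (n + 1)| + |coulombA L η n| := by
          simpa [abs_mul] using abs_sub (2 * η * coulombA L η (n + 1)) (coulombA L η n)
      _ ≤ 2 * |η| * c ^ (n + 1) + c ^ (n + 1) := by gcongr; exact ih₀.trans hpow
      _ = (2 * |η| + 1) * c ^ (n + 1) := by ring
      _ ≤ c * c ^ (n + 1) := by gcongr; exact le_max_left _ _
      _ = c ^ (n + 2) * 1 := by ring
      _ ≤ c ^ (n + 2) * d := by gcongr

theorem tendsto_coulombF_nhds_zero {L : ℝ} (η : ℝ) (hL : -1 < L) :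
    Tendsto (coulombF L η) (𝓝 0) (𝓝 1) := by
  obtain ⟨c, hc, ha⟩ := exists_abs_coulombA_le_pow η hL
  exact tendsto_tsum_mul_pow_nhds_zero hc ha

theorem coulombC_pos {L : ℝ} (η : ℝ) (hL : -1 < L) : 0 < coulombC L η := by
  have hΓ : Complex.Gamma ((L : ℂ) + 1 + η * Complex.I) ≠ 0 :=
    Complex.Gamma_ne_zero_of_re_pos (by simp; linarith)
  unfold coulombC
  have := Real.Gamma_pos_of_pos (by linarith : 0 < 2 * L + 2)
  positivity

theorem coulombC_add_one {L : ℝ} (η : ℝ) (hL : -1 < L) :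
    coulombC (L + 1) η =
      2 * √((L + 1) ^ 2 + η ^ 2) / ((2 * L + 2) * (2 * L + 3)) * coulombC L η := by
  have hz : (L : ℂ) + 1 + η * Complex.I ≠ 0 := fun h => by
    have := congrArg Complex.re h; simp at this; linarith
  have hΓ : Complex.Gamma (((L + 1 : ℝ) : ℂ) + 1 + η * Complex.I) =
      ((L : ℂ) + 1 + η * Complex.I) * Complex.Gamma ((L : ℂ) + 1 + η * Complex.I) := by
    rw [← Complex.Gamma_add_one _ hz]; push_cast; ring_nf
  have hnorm : ‖(L : ℂ) + 1 + η * Complex.I‖ = √((L + 1) ^ 2 + η ^ 2) := by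
    simpa using Complex.norm_add_mul_I (L + 1) η
  have hΓℝ : Real.Gamma (2 * (L + 1) + 2) =
      (2 * L + 3) * ((2 * L + 2) * Real.Gamma (2 * L + 2)) := by
    rw [show 2 * (L + 1) + 2 = (2 * L + 2) + 1 + 1 by ring, Real.Gamma_add_one (by linarith),
      Real.Gamma_add_one (by linarith)]
    ring_nf
  have hΓpos := Real.Gamma_pos_of_pos (by linarith : 0 < 2 * L + 2)
  unfold coulombC
  rw [hΓ, hΓℝ, norm_mul, hnorm, Real.rpow_add two_pos, Real.rpow_one]
  field_simp

theorem coulombC_ratio {L : ℝ} (η : ℝ) (hL : 0 < L) :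
    coulombC (L - 1) η * coulombC (L + 1) η / coulombC L η ^ 2 =
      L * (2 * L + 1) * √((L + 1) ^ 2 + η ^ 2) /
        ((L + 1) * (2 * L + 3) * √(L ^ 2 + η ^ 2)) := by
  have hprev := coulombC_add_one η (by linarith : -1 < L - 1)
  rw [sub_add_cancel] at hprev
  have hpos := coulombC_pos η (by linarith : -1 < L - 1)
  have hs : 0 < √(L ^ 2 + η ^ 2) := Real.sqrt_pos.mpr (by positivity)
  rw [coulombC_add_one η (by linarith), hprev]
  field_simp
  ring

theorem coulombRegF_mul_div_sq {L ρ : ℝ} (η : ℝ) (hρ : 0 < ρ) :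
    coulombRegF (L - 1) η ρ * coulombRegF (L + 1) η ρ / coulombRegF L η ρ ^ 2 =
      coulombC (L - 1) η * coulombC (L + 1) η / coulombC L η ^ 2 *
        (coulombF (L - 1) η ρ * coulombF (L + 1) η ρ / coulombF L η ρ ^ 2) := by
  have hp : ρ ^ (L + 1) ≠ 0 := (Real.rpow_pos_of_pos hρ _).ne'
  have hprod : ρ ^ (L - 1 + 1) * ρ ^ (L + 1 + 1) = (ρ ^ (L + 1)) ^ 2 := by
    rw [← Real.rpow_add hρ, ← Real.rpow_natCast, ← Real.rpow_mul hρ.le]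
    ring_nf
  unfold coulombRegF
  set C₁ := coulombC (L - 1) η; set C₂ := coulombC L η; set C₃ := coulombC (L + 1) η
  set F₁ := coulombF (L - 1) η ρ; set F₂ := coulombF L η ρ; set F₃ := coulombF (L + 1) η ρ
  calc C₁ * ρ ^ (L - 1 + 1) * F₁ * (C₃ * ρ ^ (L + 1 + 1) * F₃) / (C₂ * ρ ^ (L + 1) * F₂) ^ 2
      = C₁ * C₃ * (F₁ * F₃) * (ρ ^ (L - 1 + 1) * ρ ^ (L + 1 + 1)) /
          (C₂ ^ 2 * F₂ ^ 2 * (ρ ^ (L + 1)) ^ 2) := by ring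
    _ = C₁ * C₃ * (F₁ * F₃) * (ρ ^ (L + 1)) ^ 2 / (C₂ ^ 2 * F₂ ^ 2 * (ρ ^ (L + 1)) ^ 2) := by
        rw [hprod]
    _ = C₁ * C₃ / C₂ ^ 2 * (F₁ * F₃ / F₂ ^ 2) := by
        rw [mul_div_mul_right _ _ (pow_ne_zero 2 hp), mul_div_mul_comm]

/-- The constant in the sharp Turán type inequality is best possible: the relative
Turánian tends to `1 - C_{L-1}(η) C_{L+1}(η) / C_L(η)²` as `ρ → 0⁺`. -/
theorem coulomb_turan_sharp_limit (L η : ℝ) (hL : 0 < L) :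
    Filter.Tendsto
      (fun ρ : ℝ =>
        (coulombRegF L η ρ ^ 2 - coulombRegF (L - 1) η ρ * coulombRegF (L + 1) η ρ) /
          coulombRegF L η ρ ^ 2)
      (nhdsWithin 0 (Set.Ioi 0))
      (nhds (1 - coulombC (L - 1) η * coulombC (L + 1) η / coulombC L η ^ 2)) ∧
    1 - coulombC (L - 1) η * coulombC (L + 1) η / coulombC L η ^ 2 =
      1 - L * (2 * L + 1) * Real.sqrt ((L + 1) ^ 2 + η ^ 2) /
        ((L + 1) * (2 * L + 3) * Real.sqrt (L ^ 2 + η ^ 2)) := by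
  refine ⟨?_, by rw [coulombC_ratio η hL]⟩
  have hF : ∀ M, -1 < M → Tendsto (coulombF M η) (𝓝[>] 0) (𝓝 1) := fun M hM =>
    (tendsto_coulombF_nhds_zero η hM).mono_left nhdsWithin_le_nhds
  have hratio : Tendsto (fun ρ => coulombF (L - 1) η ρ * coulombF (L + 1) η ρ / coulombF L η ρ ^ 2)
      (𝓝[>] 0) (𝓝 1) := by
    have h := ((hF (L - 1) (by linarith)).mul (hF (L + 1) (by linarith))).div
      ((hF L (by linarith)).pow 2) (by norm_num)
    rwa [mul_one, one_pow, div_one] at h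
  have hlim := (tendsto_const_nhds (x := (1 : ℝ))).sub
    ((tendsto_const_nhds (x := coulombC (L - 1) η * coulombC (L + 1) η / coulombC L η ^ 2)).mul
      hratio)
  rw [mul_one] at hlim
  refine hlim.congr' ?_
  filter_upwards [(hF L (by linarith)).eventually_ne one_ne_zero, self_mem_nhdsWithin]
    with ρ hF₀ hρ
  have hne : coulombRegF L η ρ ^ 2 ≠ 0 := pow_ne_zero 2 <| mul_ne_zero
    (mul_ne_zero (coulombC_pos η (by linarith)).ne' (Real.rpow_pos_of_pos hρ _).ne') hF₀
  rw [← coulombRegF_mul_div_sq η hρ, one_sub_div hne]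
end

section
/- Let L > −1/2 and η ∈ ℝ. If a, b ∈ Z_{L,η} with a < b, a·b > 0 (both positive or both negative), and no element of Z_{L,η} lies in the open interval (a,b), then there exists exactly one c ∈ (a,b) such that (L+1)·𝓕_L(η,c) + c·∂𝓕_L/∂ρ(η,c) = 0 (for c > 0 this condition is equivalent to F_L'(η,c) = 0, where the prime is the derivative in ρ). In other words, the zeros of ρ ↦ F_L(η,ρ) and of ρ ↦ F_L'(η,ρ) are interlacing. -/
/-!
`𝓕_L(η,·)` is entire (its coefficients are `O(Kⁿ/n!)`) and solves
`ρ 𝓕'' + 2(L+1) 𝓕' + (ρ - 2η) 𝓕 = 0`; the reflection `(η, ρ) ↦ (-η, -ρ)` reduces the theorem to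
positive zeros. With `u = ρ^{L+1} 𝓕` and `G = (L+1) 𝓕 + ρ 𝓕'` one has `u' = ρ^L G`, so Rolle's
theorem gives a zero of `G` between consecutive zeros of `𝓕`. The equation gives
`ρ G' = -L G - q 𝓕` with `q = ρ² - 2ηρ - L(L+1)`, and every positive zero of `𝓕` lies beyond the
region where `q ≤ 0`. Hence at each zero of `G` in `(a, b)` the sign of `G'` is opposite to the
(constant) sign of `𝓕`, and `G` can vanish only once there.
-/

open Real

open Set Filter Topology

def ExpTypeCoeffs (c : ℕ → ℝ) : Prop :=
  ∃ A K : ℝ, ∀ n, |c n| ≤ A * K ^ n / n.factorial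

def derivCoeff (c : ℕ → ℝ) (n : ℕ) : ℝ := (n + 1) * c (n + 1)

namespace ExpTypeCoeffs

variable {c : ℕ → ℝ}

theorem summable_abs_mul_pow (hc : ExpTypeCoeffs c) (x : ℝ) :
    Summable fun n => |c n * x ^ n| := by
  obtain ⟨A, K, hcK⟩ := hc
  refine .of_nonneg_of_le (fun n => abs_nonneg _) (fun n => ?_)
    ((Real.summable_pow_div_factorial (K * |x|)).mul_left A)
  calc |c n * x ^ n| = |c n| * |x| ^ n := by rw [abs_mul, abs_pow]
    _ ≤ A * K ^ n / n.factorial * |x| ^ n := by gcongr; exact hcK n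
    _ = A * ((K * |x|) ^ n / n.factorial) := by rw [mul_pow]; ring

theorem summable (hc : ExpTypeCoeffs c) (x : ℝ) : Summable fun n => c n * x ^ n :=
  (hc.summable_abs_mul_pow x).of_abs

theorem deriv (hc : ExpTypeCoeffs c) : ExpTypeCoeffs (derivCoeff c) := by
  obtain ⟨A, K, hcK⟩ := hc
  refine ⟨A * K, K, fun n => ?_⟩
  calc |derivCoeff c n| = (n + 1) * |c (n + 1)| := by
        rw [derivCoeff, abs_mul, abs_of_pos (by positivity)]
    _ ≤ (n + 1) * (A * K ^ (n + 1) / (n + 1).factorial) := by gcongr; exact hcK _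
    _ = A * K * K ^ n / n.factorial := by
        rw [Nat.factorial_succ]; push_cast; field_simp; ring

theorem hasDerivAt_tsum (hc : ExpTypeCoeffs c) (x : ℝ) :
    HasDerivAt (fun y => ∑' n, c n * y ^ n) (∑' n, derivCoeff c n * x ^ n) x := by
  set R := |x| + 1
  have hsum : HasSum (fun n => c n * (n * x ^ (n - 1))) (∑' n, derivCoeff c n * x ^ n) := by
    refine (hasSum_nat_add_iff' 1).1 ?_
    simpa [derivCoeff, mul_comm, mul_left_comm, mul_assoc] using (hc.deriv.summable x).hasSum
  have hbound : Summable fun n : ℕ => |c n| * n * R ^ (n - 1) := by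
    refine (summable_nat_add_iff 1).1 ((hc.deriv.summable_abs_mul_pow R).congr fun n => ?_)
    rw [derivCoeff, abs_mul, abs_mul, abs_pow, abs_of_pos (by positivity : (0 : ℝ) < n + 1),
      abs_of_pos (by positivity : 0 < R)]
    push_cast
    ring
  rw [← hsum.tsum_eq]
  refine hasDerivAt_tsum_of_isPreconnected hbound Metric.isOpen_ball
    (convex_ball (0 : ℝ) R).isPreconnected (fun n y _ => (hasDerivAt_pow n y).const_mul (c n))
    (fun n y hy => ?_) (Metric.mem_ball_self (by positivity)) (hc.summable 0) ?_
  · rw [Metric.mem_ball, dist_zero_right, Real.norm_eq_abs] at hy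
    rw [Real.norm_eq_abs, abs_mul, abs_mul, abs_pow, Nat.abs_cast, mul_assoc]
    gcongr
  · rw [Metric.mem_ball, dist_zero_right, Real.norm_eq_abs]
    linarith

end ExpTypeCoeffs

theorem exists_zero_forall_pos_Ico {f : ℝ → ℝ} {a b : ℝ} (hf : ContinuousOn f (Icc a b))
    (hab : a ≤ b) (ha : 0 < f a) (hb : f b ≤ 0) :
    ∃ z ∈ Ioc a b, f z = 0 ∧ ∀ t ∈ Ico a z, 0 < f t := by
  set S := Icc a b ∩ f ⁻¹' Iic 0
  have hSbdd : BddBelow S := ⟨a, fun t ht => ht.1.1⟩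
  have hzS : sInf S ∈ S :=
    (hf.preimage_isClosed_of_isClosed isClosed_Icc isClosed_Iic).csInf_mem
      ⟨b, ⟨hab, le_rfl⟩, hb⟩ hSbdd
  have hpos : ∀ t ∈ Ico a (sInf S), 0 < f t := fun t ht => by
    by_contra! h
    exact (csInf_le hSbdd ⟨⟨ht.1, ht.2.le.trans hzS.1.2⟩, h⟩).not_gt ht.2
  have haz : a < sInf S := hzS.1.1.lt_of_ne fun h => (h ▸ hzS.2 : f a ≤ 0).not_gt ha
  refine ⟨sInf S, ⟨haz, hzS.1.2⟩, le_antisymm hzS.2 ?_, hpos⟩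
  by_contra! hneg
  obtain ⟨w, hw, hw0⟩ := intermediate_value_Icc' haz.le (hf.mono (Icc_subset_Icc le_rfl hzS.1.2))
    ⟨hneg.le, (hpos a ⟨le_rfl, haz⟩).le⟩
  rcases hw.2.lt_or_eq with hlt | rfl
  · exact (hpos w ⟨hw.1, hlt⟩).ne' hw0
  · exact hneg.ne hw0

theorem eventually_nhdsLT_neg_of_deriv_pos {f : ℝ → ℝ} {x₀ : ℝ} (hf : 0 < deriv f x₀)
    (hx : f x₀ = 0) : ∀ᶠ x in 𝓝[<] x₀, f x < 0 := by
  filter_upwards [nhdsWithin_le_nhds (eventually_nhdsWithin_sign_eq_of_deriv_pos hf hx),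
    self_mem_nhdsWithin] with x hsign (hlt : x < x₀)
  rwa [← sign_eq_neg_one_iff, hsign, sign_eq_neg_one_iff, sub_neg]

theorem eventually_nhdsLT_pos_of_deriv_neg {f : ℝ → ℝ} {x₀ : ℝ} (hf : deriv f x₀ < 0)
    (hx : f x₀ = 0) : ∀ᶠ x in 𝓝[<] x₀, 0 < f x := by
  filter_upwards [nhdsWithin_le_nhds (eventually_nhdsWithin_sign_eq_of_deriv_neg hf hx),
    self_mem_nhdsWithin] with x hsign (hlt : x < x₀)
  rwa [← sign_eq_one_iff, hsign, sign_eq_one_iff, sub_pos]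

theorem eventually_nhdsGT_neg_of_deriv_neg {f : ℝ → ℝ} {x₀ : ℝ} (hf : deriv f x₀ < 0)
    (hx : f x₀ = 0) : ∀ᶠ x in 𝓝[>] x₀, f x < 0 := by
  filter_upwards [nhdsWithin_le_nhds (eventually_nhdsWithin_sign_eq_of_deriv_neg hf hx),
    self_mem_nhdsWithin] with x hsign (hlt : x₀ < x)
  rwa [← sign_eq_neg_one_iff, hsign, sign_eq_neg_one_iff, sub_neg]

theorem Set.OrdConnected.subsingleton_zeros_of_deriv_neg {f : ℝ → ℝ} {s : Set ℝ}
    (hs : s.OrdConnected) (hf : ∀ x ∈ s, DifferentiableAt ℝ f x)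
    (hneg : ∀ x ∈ s, f x = 0 → deriv f x < 0) : {x ∈ s | f x = 0}.Subsingleton := by
  suffices ∀ x ∈ s, ∀ y ∈ s, f x = 0 → f y = 0 → ¬x < y from
    fun x hx y hy => le_antisymm (not_lt.1 (this y hy.1 x hx.1 hy.2 hx.2))
      (not_lt.1 (this x hx.1 y hy.1 hx.2 hy.2))
  intro x hx y hy hfx hfy hxy
  have hsub : Icc x y ⊆ s := hs.out hx hy
  obtain ⟨t, hft, hxt, hty⟩ :=
    ((eventually_nhdsGT_neg_of_deriv_neg (hneg x hx hfx) hfx).and (Ioo_mem_nhdsGT hxy)).exists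
  have hcont : ContinuousOn (fun u => -f u) (Icc t y) := fun u hu =>
    (hf u (hsub ⟨hxt.le.trans hu.1, hu.2⟩)).continuousAt.neg.continuousWithinAt
  obtain ⟨z, hz, hfz, hbefore⟩ :=
    exists_zero_forall_pos_Ico hcont hty.le (neg_pos.2 hft) (by simp [hfy])
  have hzs : z ∈ s := hsub ⟨hxt.le.trans hz.1.le, hz.2⟩
  rw [neg_eq_zero] at hfz
  obtain ⟨u, hfu, htu, huz⟩ :=
    ((eventually_nhdsLT_pos_of_deriv_neg (hneg z hzs hfz) hfz).and (Ioo_mem_nhdsLT hz.1)).exists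
  exact (neg_pos.1 (hbefore u ⟨htu.le, huz⟩)).not_gt hfu

theorem IsPreconnected.mul_pos_of_ne_zero {X : Type*} [TopologicalSpace X] {s : Set X}
    {f : X → ℝ} (hs : IsPreconnected s) (hf : ContinuousOn f s) (h0 : ∀ x ∈ s, f x ≠ 0)
    {x y : X} (hx : x ∈ s) (hy : y ∈ s) : 0 < f x * f y := by
  rcases lt_or_gt_of_ne (h0 x hx) with hfx | hfx <;> rcases lt_or_gt_of_ne (h0 y hy) with hfy | hfy
  · exact mul_pos_of_neg_of_neg hfx hfy
  · obtain ⟨w, hw, hw0⟩ := hs.intermediate_value hx hy hf ⟨hfx.le, hfy.le⟩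
    exact absurd hw0 (h0 w hw)
  · obtain ⟨w, hw, hw0⟩ := hs.intermediate_value hy hx hf ⟨hfy.le, hfx.le⟩
    exact absurd hw0 (h0 w hw)
  · exact mul_pos hfx hfy

theorem coulombA_recurrence {L : ℝ} (η : ℝ) (hL : -1/2 < L) (n : ℕ) :
    ((n : ℝ) + 2) * ((n + 2) + 2 * L + 1) * coulombA L η (n + 2) =
      2 * η * coulombA L η (n + 1) - coulombA L η n := by
  have : 0 < ((n : ℝ) + 2) + 2 * L + 1 := by linarith [(n.cast_nonneg : (0 : ℝ) ≤ n)]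
  rw [coulombA]
  field_simp

theorem abs_coulombA_add_two_mul_le {L : ℝ} (η : ℝ) (hL : -1/2 < L) (n : ℕ) :
    |coulombA L η (n + 2)| * ((n + 2) * (n + 2)) ≤
      2 * |η| * |coulombA L η (n + 1)| + |coulombA L η n| := by
  have hn : 0 < ((n : ℝ) + 2) + 2 * L + 1 := by linarith [(n.cast_nonneg : (0 : ℝ) ≤ n)]
  calc |coulombA L η (n + 2)| * ((n + 2) * (n + 2))
      ≤ |coulombA L η (n + 2)| * ((n + 2) * ((n + 2) + 2 * L + 1)) := by
        refine mul_le_mul_of_nonneg_left (mul_le_mul_of_nonneg_left ?_ (by positivity)) ?_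
        · linarith
        · exact abs_nonneg _
    _ = |2 * η * coulombA L η (n + 1) - coulombA L η n| := by
      rw [← coulombA_recurrence η hL, abs_mul,
        abs_of_pos (show (0 : ℝ) < (n + 2) * ((n + 2) + 2 * L + 1) by positivity), mul_comm]
    _ ≤ 2 * |η| * |coulombA L η (n + 1)| + |coulombA L η n| := by
      refine (abs_sub _ _).trans_eq ?_
      rw [abs_mul, abs_mul, abs_two]

theorem abs_coulombA_le {L : ℝ} (η : ℝ) (hL : -1/2 < L) (n : ℕ) :
    |coulombA L η n| ≤ (2 * |η| + 1) ^ n / n.factorial := by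
  set K := 2 * |η| + 1
  have hK : 1 ≤ K := by simp [K]
  have h2η : 2 * |η| ≤ K := by simp [K]
  induction n using Nat.twoStepInduction with
  | zero => simp [coulombA]
  | one =>
    rw [coulombA, abs_div, abs_of_pos (show 0 < L + 1 by linarith), div_le_iff₀ (by linarith)]
    simp only [pow_one, Nat.factorial_one, Nat.cast_one, div_one, K]
    nlinarith [abs_nonneg η]
  | more n ih₀ ih₁ =>
    set M := K ^ n / n.factorial
    have hM : 0 ≤ M := by positivity
    have e₁ : K ^ (n + 1) / (n + 1).factorial = K * M / (n + 1) := by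
      simp only [M, Nat.factorial_succ]; push_cast; field_simp; ring
    have e₂ : K ^ (n + 2) / (n + 2).factorial = K ^ 2 * M / ((n + 1) * (n + 2)) := by
      simp only [M, Nat.factorial_succ]; push_cast; field_simp; ring
    rw [e₁, le_div_iff₀ (by positivity)] at ih₁
    rw [e₂, le_div_iff₀ (by positivity)]
    have hKM : M ≤ K ^ 2 * M := le_mul_of_one_le_left hM (one_le_pow₀ hK)
    refine le_of_mul_le_mul_right ?_ (by positivity : (0 : ℝ) < n + 2)
    calc |coulombA L η (n + 2)| * ((n + 1) * (n + 2)) * (n + 2)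
        = (n + 1) * (|coulombA L η (n + 2)| * ((n + 2) * (n + 2))) := by ring
      _ ≤ (n + 1) * (2 * |η| * |coulombA L η (n + 1)| + |coulombA L η n|) := by
        gcongr
        exact abs_coulombA_add_two_mul_le η hL n
      _ = 2 * |η| * (|coulombA L η (n + 1)| * (n + 1)) + (n + 1) * |coulombA L η n| := by ring
      _ ≤ K * (K * M) + (n + 1) * (K ^ 2 * M) := by gcongr; exact ih₀.trans hKM
      _ = K ^ 2 * M * (n + 2) := by ring

theorem expTypeCoeffs_coulombA {L : ℝ} (η : ℝ) (hL : -1/2 < L) : ExpTypeCoeffs (coulombA L η) :=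
  ⟨1, 2 * |η| + 1, fun n => by simpa using abs_coulombA_le η hL n⟩

theorem hasSum_coulombF {L : ℝ} (η : ℝ) (hL : -1/2 < L) (x : ℝ) :
    HasSum (fun n => coulombA L η n * x ^ n) (coulombF L η x) :=
  ((expTypeCoeffs_coulombA η hL).summable x).hasSum

theorem deriv_coulombF {L : ℝ} (η : ℝ) (hL : -1/2 < L) :
    deriv (coulombF L η) = fun x => ∑' n, derivCoeff (coulombA L η) n * x ^ n :=
  funext fun x => ((expTypeCoeffs_coulombA η hL).hasDerivAt_tsum x).deriv

theorem hasSum_deriv_coulombF {L : ℝ} (η : ℝ) (hL : -1/2 < L) (x : ℝ) :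
    HasSum (fun n => derivCoeff (coulombA L η) n * x ^ n) (deriv (coulombF L η) x) := by
  rw [deriv_coulombF η hL]
  exact ((expTypeCoeffs_coulombA η hL).deriv.summable x).hasSum

theorem deriv_deriv_coulombF {L : ℝ} (η : ℝ) (hL : -1/2 < L) :
    deriv (deriv (coulombF L η)) =
      fun x => ∑' n, derivCoeff (derivCoeff (coulombA L η)) n * x ^ n := by
  rw [deriv_coulombF η hL]
  exact funext fun x => ((expTypeCoeffs_coulombA η hL).deriv.hasDerivAt_tsum x).deriv

theorem hasSum_deriv_deriv_coulombF {L : ℝ} (η : ℝ) (hL : -1/2 < L) (x : ℝ) :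
    HasSum (fun n => derivCoeff (derivCoeff (coulombA L η)) n * x ^ n)
      (deriv (deriv (coulombF L η)) x) := by
  rw [deriv_deriv_coulombF η hL]
  exact ((expTypeCoeffs_coulombA η hL).deriv.deriv.summable x).hasSum

theorem differentiable_coulombF {L : ℝ} (η : ℝ) (hL : -1/2 < L) :
    Differentiable ℝ (coulombF L η) :=
  fun x => ((expTypeCoeffs_coulombA η hL).hasDerivAt_tsum x).differentiableAt

theorem differentiable_deriv_coulombF {L : ℝ} (η : ℝ) (hL : -1/2 < L) :
    Differentiable ℝ (deriv (coulombF L η)) := by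
  rw [deriv_coulombF η hL]
  exact fun x => ((expTypeCoeffs_coulombA η hL).deriv.hasDerivAt_tsum x).differentiableAt

theorem coulombF_zero (L η : ℝ) : coulombF L η 0 = 1 := by
  rw [coulombF, tsum_eq_single 0 fun n hn => by simp [hn]]
  simp [coulombA]

theorem coulombF_ode {L : ℝ} (η : ℝ) (hL : -1/2 < L) (x : ℝ) :
    x * deriv (deriv (coulombF L η)) x + 2 * (L + 1) * deriv (coulombF L η) x +
      (x - 2 * η) * coulombF L η x = 0 := by
  have hlow : HasSum (fun n => (2 * (L + 1) * derivCoeff (coulombA L η) (n + 1) -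
      2 * η * coulombA L η (n + 1)) * x ^ (n + 1))
      (2 * (L + 1) * deriv (coulombF L η) x - 2 * η * coulombF L η x) := by
    have h := ((hasSum_deriv_coulombF η hL x).mul_left (2 * (L + 1))).sub
      ((hasSum_coulombF η hL x).mul_left (2 * η))
    rw [← hasSum_nat_add_iff' 1, Finset.sum_range_one] at h
    have h0 : 2 * (L + 1) * (derivCoeff (coulombA L η) 0 * x ^ 0) -
        2 * η * (coulombA L η 0 * x ^ 0) = 0 := by
      have : L + 1 ≠ 0 := by linarith
      simp only [derivCoeff, coulombA]
      field_simp
      ring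
    rw [h0, sub_zero] at h
    exact h.congr_fun fun n => by ring
  have hhigh := ((hasSum_deriv_deriv_coulombF η hL x).add (hasSum_coulombF η hL x)).mul_left (-x)
  have hcoeff : ∀ n, (2 * (L + 1) * derivCoeff (coulombA L η) (n + 1) -
      2 * η * coulombA L η (n + 1)) * x ^ (n + 1) =
      -x * (derivCoeff (derivCoeff (coulombA L η)) n * x ^ n + coulombA L η n * x ^ n) := by
    intro n
    simp only [derivCoeff, Nat.cast_add, Nat.cast_one]
    linear_combination x ^ (n + 1) * coulombA_recurrence η hL n
  linear_combination hlow.unique (hhigh.congr_fun hcoeff)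

theorem coulombA_neg (L η : ℝ) (n : ℕ) : coulombA L (-η) n = (-1) ^ n * coulombA L η n := by
  induction n using Nat.twoStepInduction with
  | zero => simp [coulombA]
  | one => simp [coulombA, neg_div]
  | more n ih₀ ih₁ =>
    rw [coulombA, coulombA, ih₀, ih₁]
    ring

theorem coulombF_neg (L η x : ℝ) : coulombF L (-η) (-x) = coulombF L η x := by
  refine tsum_congr fun n => ?_
  have : ((-1 : ℝ) ^ n) * (-1) ^ n = 1 := by rw [← mul_pow]; norm_num
  rw [coulombA_neg, neg_pow]
  linear_combination coulombA L η n * x ^ n * this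

/-- `ρ^{-L} (ρ^{L+1} 𝓕_L(η,ρ))'`, that is `F_L'(η,ρ) / (C_L(η) ρ^L)` for `ρ > 0`. -/
noncomputable def coulombG (L η ρ : ℝ) : ℝ :=
  (L + 1) * coulombF L η ρ + ρ * deriv (coulombF L η) ρ

/-- `ρ²` times the coefficient in the Coulomb equation `u'' + (1 - 2η/ρ - L(L+1)/ρ²) u = 0`
satisfied by `u = ρ^{L+1} 𝓕_L(η,ρ)`. -/
def coulombQ (L η ρ : ℝ) : ℝ := ρ ^ 2 - 2 * η * ρ - L * (L + 1)

theorem coulombG_neg (L η x : ℝ) : coulombG L (-η) (-x) = coulombG L η x := by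
  have h : coulombF L (-η) = fun y => coulombF L η (-y) :=
    funext fun y => by rw [← coulombF_neg L η (-y), neg_neg]
  simp only [coulombG, h, deriv_comp_neg, neg_neg]
  ring

theorem hasDerivAt_coulombG {L : ℝ} (η : ℝ) (hL : -1/2 < L) (x : ℝ) :
    HasDerivAt (coulombG L η)
      ((L + 2) * deriv (coulombF L η) x + x * deriv (deriv (coulombF L η)) x) x :=
  (((differentiable_coulombF η hL x).hasDerivAt.const_mul (L + 1)).add
    ((hasDerivAt_id x).mul (differentiable_deriv_coulombF η hL x).hasDerivAt)).congr_deriv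
    (by simp only [id]; ring)

theorem mul_deriv_coulombG {L : ℝ} (η : ℝ) (hL : -1/2 < L) (x : ℝ) :
    x * deriv (coulombG L η) x =
      -L * coulombG L η x - coulombQ L η x * coulombF L η x := by
  rw [(hasDerivAt_coulombG η hL x).deriv]
  simp only [coulombG, coulombQ]
  linear_combination x * coulombF_ode η hL x

theorem hasDerivAt_rpow_mul_coulombF {L : ℝ} (η : ℝ) (hL : -1/2 < L) {t : ℝ} (ht : 0 < t) :
    HasDerivAt (fun s => s ^ (L + 1) * coulombF L η s) (t ^ L * coulombG L η t) t := by
  refine ((Real.hasDerivAt_rpow_const (Or.inl ht.ne')).mul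
    (differentiable_coulombF η hL t).hasDerivAt).congr_deriv ?_
  rw [add_sub_cancel_right, Real.rpow_add_one ht.ne', coulombG]
  ring

theorem hasDerivAt_rpow_mul_coulombG {L : ℝ} (η : ℝ) (hL : -1/2 < L) {t : ℝ} (ht : 0 < t) :
    HasDerivAt (fun s => s ^ L * coulombG L η s)
      (-(t ^ (L - 1) * (coulombQ L η t * coulombF L η t))) t := by
  refine ((Real.hasDerivAt_rpow_const (Or.inl ht.ne')).mul
    (hasDerivAt_coulombG η hL t).differentiableAt.hasDerivAt).congr_deriv ?_
  have h := mul_deriv_coulombG η hL t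
  rw [show t ^ L = t ^ (L - 1) * t by rw [← Real.rpow_add_one ht.ne', sub_add_cancel]]
  linear_combination t ^ (L - 1) * h

theorem hasDerivAt_rpow_mul_deriv_coulombF {L : ℝ} (η : ℝ) (hL : -1/2 < L) {t : ℝ}
    (ht : 0 < t) :
    HasDerivAt (fun s => s ^ (2 * L + 2) * deriv (coulombF L η) s)
      (t ^ (2 * L + 1) * ((2 * η - t) * coulombF L η t)) t := by
  refine ((Real.hasDerivAt_rpow_const (Or.inl ht.ne')).mul
    (differentiable_deriv_coulombF η hL t).hasDerivAt).congr_deriv ?_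
  rw [show 2 * L + 2 - 1 = 2 * L + 1 by ring,
    show t ^ (2 * L + 2) = t ^ (2 * L + 1) * t by rw [← Real.rpow_add_one ht.ne']; ring_nf]
  linear_combination t ^ (2 * L + 1) * coulombF_ode η hL t

/-- While positive, `u = ρ^{L+1} 𝓕` is convex where `coulombQ ≤ 0`; with `u' > 0` near `0`
it keeps increasing there. -/
theorem coulombF_ne_zero_of_forall_coulombQ_nonpos {L : ℝ} (η : ℝ) (hL : -1/2 < L) {z : ℝ}
    (hz : 0 < z) (hpos : ∀ t ∈ Ico 0 z, 0 < coulombF L η t)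
    (hq : ∀ t ∈ Ioc 0 z, coulombQ L η t ≤ 0) : coulombF L η z ≠ 0 := by
  intro hFz
  have hG0 : 0 < coulombG L η 0 := by simp [coulombG, coulombF_zero]; linarith
  obtain ⟨δ, hGδ, hδ, hδz⟩ :=
    ((((hasDerivAt_coulombG η hL 0).continuousAt.eventually (eventually_gt_nhds hG0)).filter_mono
      nhdsWithin_le_nhds).and (Ioo_mem_nhdsGT hz)).exists
  have hw : MonotoneOn (fun s => s ^ L * coulombG L η s) (Icc δ z) := by
    refine monotoneOn_of_hasDerivWithinAt_nonneg (convex_Icc δ z)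
      (f' := fun t => -(t ^ (L - 1) * (coulombQ L η t * coulombF L η t))) (fun t ht => ?_)
      (fun t ht => ?_) (fun t ht => ?_)
    · exact (hasDerivAt_rpow_mul_coulombG η hL (hδ.trans_le ht.1)).continuousAt.continuousWithinAt
    · rw [interior_Icc] at ht
      exact (hasDerivAt_rpow_mul_coulombG η hL (hδ.trans ht.1)).hasDerivWithinAt
    · rw [interior_Icc] at ht
      have ht0 : 0 < t := hδ.trans ht.1
      have := mul_nonpos_of_nonpos_of_nonneg (hq t ⟨ht0, ht.2.le⟩) (hpos t ⟨ht0.le, ht.2⟩).le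
      have := Real.rpow_pos_of_pos ht0 (L - 1)
      nlinarith
  have hu : StrictMonoOn (fun s => s ^ (L + 1) * coulombF L η s) (Icc δ z) := by
    refine strictMonoOn_of_hasDerivWithinAt_pos (convex_Icc δ z)
      (f' := fun t => t ^ L * coulombG L η t) (fun t ht => ?_)
      (fun t ht => ?_) (fun t ht => ?_)
    · exact (hasDerivAt_rpow_mul_coulombF η hL (hδ.trans_le ht.1)).continuousAt.continuousWithinAt
    · rw [interior_Icc] at ht
      exact (hasDerivAt_rpow_mul_coulombF η hL (hδ.trans ht.1)).hasDerivWithinAt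
    · rw [interior_Icc] at ht
      exact (mul_pos (Real.rpow_pos_of_pos hδ L) hGδ).trans_le
        (hw (left_mem_Icc.2 hδz.le) (Ioo_subset_Icc_self ht) ht.1.le)
  have := hu (left_mem_Icc.2 hδz.le) (right_mem_Icc.2 hδz.le) hδz
  dsimp only at this
  rw [hFz, mul_zero] at this
  exact this.not_gt (mul_pos (Real.rpow_pos_of_pos hδ _) (hpos δ ⟨hδ.le, hδz⟩))

/-- `(ρ^{2L+2} 𝓕')' = ρ^{2L+1} (2η - ρ) 𝓕 > 0` before the first zero, and `ρ^{2L+2} 𝓕'` vanishes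
at `0`, so `𝓕' > 0` at the first zero: impossible. -/
theorem coulombF_ne_zero_of_le_two_mul {L : ℝ} (η : ℝ) (hL : -1/2 < L) {z : ℝ} (hz : 0 < z)
    (hpos : ∀ t ∈ Ico 0 z, 0 < coulombF L η t) (hzη : z ≤ 2 * η) : coulombF L η z ≠ 0 := by
  intro hFz
  have hW : StrictMonoOn (fun s => s ^ (2 * L + 2) * deriv (coulombF L η) s) (Icc 0 z) := by
    refine strictMonoOn_of_hasDerivWithinAt_pos (convex_Icc 0 z)
      (f' := fun t => t ^ (2 * L + 1) * ((2 * η - t) * coulombF L η t))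
      ((continuousOn_id.rpow_const fun _ _ => Or.inr (by linarith)).mul
        (differentiable_deriv_coulombF η hL).continuous.continuousOn) (fun t ht => ?_)
      (fun t ht => ?_)
    · rw [interior_Icc] at ht
      exact (hasDerivAt_rpow_mul_deriv_coulombF η hL ht.1).hasDerivWithinAt
    · rw [interior_Icc] at ht
      have := hpos t ⟨ht.1.le, ht.2⟩
      have := Real.rpow_pos_of_pos ht.1 (2 * L + 1)
      have : 0 < 2 * η - t := by linarith [ht.2]
      positivity
  have hWz := hW (left_mem_Icc.2 hz.le) (right_mem_Icc.2 hz.le) hz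
  dsimp only at hWz
  rw [Real.zero_rpow (by linarith), zero_mul] at hWz
  have hd : 0 < deriv (coulombF L η) z :=
    (pos_iff_pos_of_mul_pos hWz).1 (Real.rpow_pos_of_pos hz _)
  obtain ⟨t, hFt, ht0, htz⟩ :=
    ((eventually_nhdsLT_neg_of_deriv_pos hd hFz).and (Ioo_mem_nhdsLT hz)).exists
  exact (hpos t ⟨ht0.le, htz⟩).not_gt hFt

theorem coulombQ_pos_of_coulombF_eq_zero {L : ℝ} (η : ℝ) (hL : -1/2 < L) {z₀ x : ℝ}
    (hz₀ : 0 < z₀) (hF : coulombF L η z₀ = 0) (hx : z₀ ≤ x) : 0 < coulombQ L η x := by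
  obtain ⟨z, ⟨hz, hzz₀⟩, hFz, hpos⟩ :=
    exists_zero_forall_pos_Ico (differentiable_coulombF η hL).continuous.continuousOn hz₀.le
      (by rw [coulombF_zero]; exact one_pos) hF.le
  by_contra! hq
  have hx0 : 0 < x := hz₀.trans_le hx
  unfold coulombQ at hq
  rcases le_or_gt 0 (L * (L + 1)) with hLL | hLL
  · refine coulombF_ne_zero_of_forall_coulombQ_nonpos η hL hz hpos (fun t ht => ?_) hFz
    have htx : t ≤ x := ht.2.trans (hzz₀.trans hx)
    unfold coulombQ
    by_contra! hqt
    nlinarith [mul_pos hx0 hqt, mul_nonneg ht.1.le (neg_nonneg.2 hq),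
      mul_nonneg (mul_nonneg hx0.le ht.1.le) (sub_nonneg.2 htx), mul_nonneg hLL (sub_nonneg.2 htx)]
  · exact coulombF_ne_zero_of_le_two_mul η hL hz hpos (by nlinarith) hFz

theorem existsUnique_coulombG_eq_zero_of_pos {L : ℝ} (η : ℝ) (hL : -1/2 < L) {a b : ℝ}
    (ha : 0 < a) (hab : a < b) (hFa : coulombF L η a = 0) (hFb : coulombF L η b = 0)
    (hF : ∀ x ∈ Ioo a b, coulombF L η x ≠ 0) :
    ∃! c, c ∈ Ioo a b ∧ coulombG L η c = 0 := by
  obtain ⟨c, hc, hc0⟩ := exists_hasDerivAt_eq_zero hab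
    (fun t ht =>
      (hasDerivAt_rpow_mul_coulombF η hL (ha.trans_le ht.1)).continuousAt.continuousWithinAt)
    (by simp only [hFa, hFb, mul_zero])
    (fun t ht => hasDerivAt_rpow_mul_coulombF η hL (ha.trans ht.1))
  have hGc : coulombG L η c = 0 :=
    (mul_eq_zero.1 hc0).resolve_left (Real.rpow_pos_of_pos (ha.trans hc.1) L).ne'
  refine ⟨c, ⟨hc, hGc⟩, fun d hd => ?_⟩
  have hdiff : ∀ t, DifferentiableAt ℝ (fun s => coulombF L η c * coulombG L η s) t :=
    fun t => (hasDerivAt_coulombG η hL t).differentiableAt.const_mul _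
  refine ordConnected_Ioo.subsingleton_zeros_of_deriv_neg (fun t _ => hdiff t)
    (fun t ht hzero => ?_)
    ⟨hd.1, by simp only [hd.2, mul_zero]⟩ ⟨hc, by simp only [hGc, mul_zero]⟩
  have hGt : coulombG L η t = 0 := (mul_eq_zero.1 hzero).resolve_left (hF c hc)
  have hsign : 0 < coulombF L η c * coulombF L η t :=
    isPreconnected_Ioo.mul_pos_of_ne_zero (differentiable_coulombF η hL).continuous.continuousOn
      hF hc ht
  have hq := coulombQ_pos_of_coulombF_eq_zero η hL ha hFa ht.1.le
  have hG' := mul_deriv_coulombG η hL t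
  rw [hGt, mul_zero, zero_sub] at hG'
  have key : t * (coulombF L η c * deriv (coulombG L η) t) =
      -(coulombQ L η t * (coulombF L η c * coulombF L η t)) := by
    linear_combination coulombF L η c * hG'
  rw [deriv_const_mul _ (hasDerivAt_coulombG η hL t).differentiableAt]
  exact neg_of_mul_neg_right (key ▸ neg_neg_of_pos (mul_pos hq hsign)) (ha.trans ht.1).le

/-- The zeros of `ρ ↦ F_L(η,ρ)` and of `ρ ↦ F_L'(η,ρ)` are interlacing: between any two
consecutive zeros of the Coulomb wave function of the same sign there is exactly one point
where `(L+1) 𝓕_L(η,·) + ρ ∂𝓕_L/∂ρ(η,·)` vanishes (for positive arguments this is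
equivalent to the vanishing of `F_L'(η,·)`). -/
theorem coulomb_deriv_zeros_interlacing (L η : ℝ) (hL : -1/2 < L) (a b : ℝ)
    (ha : a ∈ coulombZ L η) (hb : b ∈ coulombZ L η) (hab : a < b) (hsign : 0 < a * b)
    (hconsec : ∀ x ∈ coulombZ L η, x ∉ Set.Ioo a b) :
    ∃! c, c ∈ Set.Ioo a b ∧
      (L + 1) * coulombF L η c + c * deriv (coulombF L η) c = 0 := by
  obtain ⟨-, hFa⟩ := ha
  obtain ⟨-, hFb⟩ := hb
  have hF : ∀ x ∈ Ioo a b, coulombF L η x ≠ 0 := fun x hx hFx =>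
    hconsec x ⟨by rintro rfl; exact (mul_neg_of_neg_of_pos hx.1 hx.2).not_gt hsign, hFx⟩ hx
  change ∃! c, c ∈ Ioo a b ∧ coulombG L η c = 0
  rcases mul_pos_iff.1 hsign with ⟨ha0, -⟩ | ⟨-, hb0⟩
  · exact existsUnique_coulombG_eq_zero_of_pos η hL ha0 hab hFa hFb hF
  have hreflect := existsUnique_coulombG_eq_zero_of_pos (-η) hL (neg_pos.2 hb0) (neg_lt_neg hab)
    (by rwa [coulombF_neg]) (by rwa [coulombF_neg]) fun x hx => by
      rw [← neg_neg x, coulombF_neg]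
      exact hF (-x) ⟨lt_neg_of_lt_neg hx.2, neg_lt_of_neg_lt hx.1⟩
  refine ((Equiv.neg ℝ).existsUnique_congr fun c => ?_).2 hreflect
  rw [Equiv.neg_apply, coulombG_neg, mem_Ioo, mem_Ioo, neg_lt_neg_iff, neg_lt_neg_iff,
    and_comm (a := b > c)]
end

section
/- Let L > −1 and η ∈ ℝ. If a, b ∈ Z_{L,η} with a < b and no element of Z_{L,η} lies in the open interval (a,b), then there exists exactly one c ∈ (a,b) with ∂𝓕_L/∂ρ(η,c) = 0 (for c > 0 this condition is equivalent to c·F_L'(η,c) − (L+1)·F_L(η,c) = 0, since ρF_L'(η,ρ) − (L+1)F_L(η,ρ) = C_L(η)ρ^{L+2}·∂𝓕_L/∂ρ(η,ρ)). In other words, the zeros of ρ ↦ F_L(η,ρ) and of ρ ↦ ρF_L'(η,ρ) − (L+1)F_L(η,ρ) are interlacing. -/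
open Real

/-!
Rolle's theorem gives a critical point of `𝓕 = 𝓕_L(η, ·)` between consecutive zeros `a < b`.
For uniqueness, `𝓕` solves `x 𝓕'' + (2L + 2) 𝓕' + (x - 2η) 𝓕 = 0`, so `x ^ (2L+2)` is an
integrating factor: `h = x ^ (2L+2) 𝓕'` satisfies `h' = x ^ (2L+1) (2η - x) 𝓕` for `x > 0`.
Say `𝓕 > 0` on `(a, b)`. Then `h` increases on `(0, 2η)` and decreases beyond, so two positive
critical points `c₁ < c₂` (where `h` vanishes) straddle `2η`, and `h` increases on `[l, c₁]`
for `l = max a 0`, giving `h l < 0`. But `h 0 = 0` since `2L + 2 > 0`, and `𝓕' a ≥ 0` if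
`a > 0` because `𝓕` leaves its zero `a` upwards. Two negative critical points reduce to this
case since `x ↦ 𝓕(-x)` solves the equation with `-η`, and a critical point `c` with
`𝓕 > 0` between `0` and `c` has the sign of `η`, which rules out critical points of
opposite signs.
-/

open Set Nat

theorem IsPreconnected.pos_or_neg_of_ne_zero {s : Set ℝ} {f : ℝ → ℝ} (hs : IsPreconnected s)
    (hf : ContinuousOn f s) (h0 : ∀ x ∈ s, f x ≠ 0) :
    (∀ x ∈ s, 0 < f x) ∨ ∀ x ∈ s, f x < 0 := by
  by_contra! h
  obtain ⟨⟨x, hx, hfx⟩, ⟨y, hy, hfy⟩⟩ := h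
  obtain ⟨z, hz, hfz⟩ := hs.intermediate_value hx hy hf ⟨hfx, hfy⟩
  exact h0 z hz hfz

theorem deriv_nonneg_of_eq_zero_of_pos {f : ℝ → ℝ} {a b : ℝ} (hf : DifferentiableAt ℝ f a)
    (hab : a < b) (hfa : f a = 0) (hpos : ∀ x ∈ Ioo a b, 0 < f x) : 0 ≤ deriv f a := by
  have hslope := (hasDerivAt_iff_tendsto_slope.1 hf.hasDerivAt).mono_left
    (nhdsWithin_mono a fun x (hx : x ∈ Ioi a) => hx.ne')
  refine ge_of_tendsto hslope ?_
  filter_upwards [Ioo_mem_nhdsGT hab] with x hx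
  rw [slope_def_field, hfa, sub_zero]
  exact (div_pos (hpos x hx) (sub_pos.2 hx.1)).le

namespace Coulomb

noncomputable def derivCoeff (a : ℕ → ℝ) (n : ℕ) : ℝ := (n + 1) * a (n + 1)

def FactorialDecay (a : ℕ → ℝ) : Prop := ∃ K C : ℝ, ∀ n, |a n| * n ! ≤ K * C ^ n

namespace FactorialDecay

variable {a : ℕ → ℝ}

theorem summable_abs_mul_pow (ha : FactorialDecay a) (r : ℝ) :
    Summable fun n => |a n| * |r| ^ n := by
  obtain ⟨K, C, hKC⟩ := ha
  refine ((Real.summable_pow_div_factorial (C * |r|)).mul_left K).of_nonneg_of_le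
    (fun n => by positivity) fun n => ?_
  have hn : |a n| ≤ K * C ^ n / n ! := by
    rw [le_div_iff₀ (by positivity)]; exact hKC n
  calc |a n| * |r| ^ n ≤ K * C ^ n / n ! * |r| ^ n := by gcongr
    _ = K * ((C * |r|) ^ n / n !) := by ring

theorem summable (ha : FactorialDecay a) (x : ℝ) : Summable fun n => a n * x ^ n :=
  (ha.summable_abs_mul_pow x).of_norm_bounded fun n => by simp

theorem derivCoeff (ha : FactorialDecay a) : FactorialDecay (derivCoeff a) := by
  obtain ⟨K, C, hKC⟩ := ha
  refine ⟨K * C, C, fun n => ?_⟩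
  calc |Coulomb.derivCoeff a n| * n ! = |a (n + 1)| * (n + 1) ! := by
        rw [Coulomb.derivCoeff, abs_mul, abs_of_pos (by positivity), factorial_succ]
        push_cast; ring
    _ ≤ K * C ^ (n + 1) := hKC (n + 1)
    _ = K * C * C ^ n := by ring

theorem hasDerivAt (ha : FactorialDecay a) (x : ℝ) :
    HasDerivAt (fun y => ∑' n, a n * y ^ n) (∑' n, Coulomb.derivCoeff a n * x ^ n) x := by
  set R := |x| + 1
  have hR : |R| = R := abs_of_pos (by positivity)
  have hbound : ∀ n, ∀ y ∈ Ioo (-R) R, ‖a n * (n * y ^ (n - 1))‖ ≤ |a n| * (n * R ^ (n - 1)) := by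
    intro n y hy
    rw [Real.norm_eq_abs, abs_mul, abs_mul, abs_pow, Nat.abs_cast]
    gcongr
    exact abs_lt.2 hy |>.le
  have hu : Summable fun n => |a n| * (n * R ^ (n - 1)) := by
    refine (summable_nat_add_iff 1).1 ((ha.derivCoeff.summable_abs_mul_pow R).congr fun n => ?_)
    rw [Coulomb.derivCoeff, abs_mul, abs_of_pos (by positivity), hR]
    push_cast; ring
  have hx : x ∈ Ioo (-R) R := abs_lt.1 (by simp [R])
  have hderiv := hasDerivAt_tsum_of_isPreconnected hu isOpen_Ioo isPreconnected_Ioo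
    (fun n y _ => (hasDerivAt_pow n y).const_mul (a n)) hbound hx (ha.summable x) hx
  have hsx := (hu.of_nonneg_of_le (fun n => norm_nonneg _) fun n => hbound n x hx).of_norm
  refine hderiv.congr_deriv ?_
  rw [hsx.tsum_eq_zero_add]
  simp [Coulomb.derivCoeff, mul_left_comm, mul_comm]

end FactorialDecay

/-- The equation satisfied by `𝓕_L(η, ·)`: substitute `u = ρ^(L+1) 𝓕` in the Coulomb wave
equation `u'' + (1 - 2η/ρ - L(L+1)/ρ²) u = 0`. -/
structure IsCoulombSolution (L η : ℝ) (f : ℝ → ℝ) : Prop where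
  differentiable : Differentiable ℝ f
  differentiable_deriv : Differentiable ℝ (deriv f)
  ode : ∀ x, x * deriv (deriv f) x + (2 * L + 2) * deriv f x + (x - 2 * η) * f x = 0

noncomputable def weightedDeriv (L : ℝ) (f : ℝ → ℝ) (x : ℝ) : ℝ := x ^ (2 * L + 2) * deriv f x

theorem weightedDeriv_zero {L : ℝ} (hL : -1 < L) (f : ℝ → ℝ) : weightedDeriv L f 0 = 0 := by
  rw [weightedDeriv, Real.zero_rpow (by linarith), zero_mul]

namespace IsCoulombSolution

variable {L η : ℝ} {f : ℝ → ℝ}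

theorem neg (hf : IsCoulombSolution L η f) : IsCoulombSolution L η (-f) where
  differentiable := hf.differentiable.neg
  differentiable_deriv := by rw [deriv.neg']; exact hf.differentiable_deriv.neg
  ode x := by
    simp only [deriv.neg', deriv.fun_neg, Pi.neg_apply]
    linear_combination -hf.ode x

theorem comp_neg (hf : IsCoulombSolution L η f) :
    IsCoulombSolution L (-η) fun x => f (-x) := by
  have hd : deriv (fun x => f (-x)) = fun x => -deriv f (-x) :=
    funext fun x => deriv_comp_neg f x
  have hd2 : deriv (fun x => -deriv f (-x)) = fun x => deriv (deriv f) (-x) := by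
    funext x; rw [deriv.fun_neg, deriv_comp_neg, neg_neg]
  refine ⟨hf.differentiable.comp differentiable_neg, ?_, fun x => ?_⟩
  · rw [hd]; exact (hf.differentiable_deriv.comp differentiable_neg).neg
  · rw [hd, hd2]
    linear_combination -hf.ode (-x)

theorem add_one_mul_deriv_zero (hf : IsCoulombSolution L η f) : (L + 1) * deriv f 0 = η * f 0 := by
  linear_combination hf.ode 0 / 2

theorem continuous_weightedDeriv (hf : IsCoulombSolution L η f) (hL : -1 < L) :
    Continuous (weightedDeriv L f) :=
  (Real.continuous_rpow_const (by linarith)).mul hf.differentiable_deriv.continuous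

theorem hasDerivAt_weightedDeriv (hf : IsCoulombSolution L η f) {x : ℝ} (hx : 0 < x) :
    HasDerivAt (weightedDeriv L f) (x ^ (2 * L + 1) * ((2 * η - x) * f x)) x := by
  have hpow := Real.hasDerivAt_rpow_const (x := x) (p := 2 * L + 2) (Or.inl hx.ne')
  refine (hpow.mul (hf.differentiable_deriv x).hasDerivAt).congr_deriv ?_
  have hsplit : x ^ (2 * L + 2) = x ^ (2 * L + 1) * x := by
    rw [← Real.rpow_add_one hx.ne']; ring_nf
  rw [show 2 * L + 2 - 1 = 2 * L + 1 by ring, hsplit]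
  linear_combination x ^ (2 * L + 1) * hf.ode x

theorem strictMonoOn_weightedDeriv (hf : IsCoulombSolution L η f) (hL : -1 < L) {l r : ℝ}
    (hl : 0 ≤ l) (hr : r ≤ 2 * η) (hpos : ∀ x ∈ Ioo l r, 0 < f x) :
    StrictMonoOn (weightedDeriv L f) (Icc l r) := by
  refine strictMonoOn_of_deriv_pos (convex_Icc l r) (hf.continuous_weightedDeriv hL).continuousOn
    fun x hx => ?_
  rw [interior_Icc] at hx
  have hx0 : 0 < x := hl.trans_lt hx.1
  rw [(hf.hasDerivAt_weightedDeriv hx0).deriv]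
  exact mul_pos (Real.rpow_pos_of_pos hx0 _) (mul_pos (by linarith [hx.2]) (hpos x hx))

theorem strictAntiOn_weightedDeriv (hf : IsCoulombSolution L η f) (hL : -1 < L) {l r : ℝ}
    (hl : 0 ≤ l) (hη : 2 * η ≤ l) (hpos : ∀ x ∈ Ioo l r, 0 < f x) :
    StrictAntiOn (weightedDeriv L f) (Icc l r) := by
  refine strictAntiOn_of_deriv_neg (convex_Icc l r) (hf.continuous_weightedDeriv hL).continuousOn
    fun x hx => ?_
  rw [interior_Icc] at hx
  have hx0 : 0 < x := hl.trans_lt hx.1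
  rw [(hf.hasDerivAt_weightedDeriv hx0).deriv]
  exact mul_neg_of_pos_of_neg (Real.rpow_pos_of_pos hx0 _)
    (mul_neg_of_neg_of_pos (by linarith [hx.1]) (hpos x hx))

theorem two_mul_mem_Ioo_of_weightedDeriv_eq (hf : IsCoulombSolution L η f) (hL : -1 < L)
    {l r : ℝ} (hl : 0 ≤ l) (hlr : l < r) (hpos : ∀ x ∈ Ioo l r, 0 < f x)
    (heq : weightedDeriv L f l = weightedDeriv L f r) : 2 * η ∈ Ioo l r := by
  have hl_mem : l ∈ Icc l r := left_mem_Icc.2 hlr.le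
  have hr_mem : r ∈ Icc l r := right_mem_Icc.2 hlr.le
  constructor
  · by_contra! hη
    exact (hf.strictAntiOn_weightedDeriv hL hl hη hpos hl_mem hr_mem hlr).ne' heq
  · by_contra! hη
    exact (hf.strictMonoOn_weightedDeriv hL hl hη hpos hl_mem hr_mem hlr).ne heq

theorem eta_pos_of_deriv_eq_zero (hf : IsCoulombSolution L η f) (hL : -1 < L) {c : ℝ}
    (hc : 0 < c) (hpos : ∀ x ∈ Ioo 0 c, 0 < f x) (hfc : deriv f c = 0) : 0 < η := by
  have h := hf.two_mul_mem_Ioo_of_weightedDeriv_eq hL le_rfl hc hpos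
    (by rw [weightedDeriv_zero hL, weightedDeriv, hfc, mul_zero])
  linarith [h.1]

theorem sign_eta_eq_sign_of_deriv_eq_zero (hf : IsCoulombSolution L η f) (hL : -1 < L) {c : ℝ}
    (hpos : ∀ x ∈ uIcc 0 c, 0 < f x) (hfc : deriv f c = 0) : SignType.sign η = SignType.sign c := by
  rcases lt_trichotomy c 0 with hc | rfl | hc
  · have hη := hf.comp_neg.eta_pos_of_deriv_eq_zero hL (neg_pos.2 hc)
      (fun x hx => hpos (-x) <| by
        rw [uIcc_of_ge hc.le]; exact ⟨by linarith [hx.2], by linarith [hx.1]⟩)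
      (by rw [deriv_comp_neg, neg_neg, hfc, neg_zero])
    rw [sign_neg hc, sign_neg (neg_pos.1 hη)]
  · have h0 : η * f 0 = 0 := by rw [← hf.add_one_mul_deriv_zero, hfc, mul_zero]
    rw [(mul_eq_zero.1 h0).resolve_right (hpos 0 (by simp)).ne']
  · have hη := hf.eta_pos_of_deriv_eq_zero hL hc
      (fun x hx => hpos x (uIcc_of_le hc.le ▸ Ioo_subset_Icc_self hx)) hfc
    rw [sign_pos hc, sign_pos hη]

theorem deriv_ne_zero_of_pos_of_lt (hf : IsCoulombSolution L η f) (hL : -1 < L)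
    {a c₁ c₂ : ℝ} (hfa : f a = 0) (hpos : ∀ x ∈ Ioo a c₂, 0 < f x) (ha : a < c₁)
    (h₁ : 0 < c₁) (hc : c₁ < c₂) (hc₁ : deriv f c₁ = 0) : deriv f c₂ ≠ 0 := by
  intro hc₂
  set l := max a 0 with hl
  have hw : 0 ≤ weightedDeriv L f l := by
    rcases le_or_gt a 0 with ha0 | ha0
    · rw [hl, max_eq_right ha0, weightedDeriv_zero hL]
    · rw [hl, max_eq_left ha0.le, weightedDeriv]
      exact mul_nonneg (Real.rpow_nonneg ha0.le _) (deriv_nonneg_of_eq_zero_of_pos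
        (hf.differentiable a) (ha.trans hc) hfa hpos)
  have hw₁ : weightedDeriv L f c₁ = 0 := by rw [weightedDeriv, hc₁, mul_zero]
  have hw₂ : weightedDeriv L f c₂ = 0 := by rw [weightedDeriv, hc₂, mul_zero]
  have hη := hf.two_mul_mem_Ioo_of_weightedDeriv_eq hL h₁.le hc
    (fun x hx => hpos x ⟨ha.trans hx.1, hx.2⟩) (hw₁.trans hw₂.symm)
  have hlc : l < c₁ := max_lt ha h₁
  have hmono := hf.strictMonoOn_weightedDeriv hL (le_max_right a 0) hη.1.le
    (fun x hx => hpos x ⟨(le_max_left a 0).trans_lt hx.1, hx.2.trans hc⟩)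
    (left_mem_Icc.2 hlc.le) (right_mem_Icc.2 hlc.le) hlc
  linarith

theorem deriv_ne_zero_of_lt (hf : IsCoulombSolution L η f) (hL : -1 < L) {a b c₁ c₂ : ℝ}
    (hfa : f a = 0) (hfb : f b = 0) (hpos : ∀ x ∈ Ioo a b, 0 < f x) (ha : a < c₁)
    (hc : c₁ < c₂) (hb : c₂ < b) (hc₁ : deriv f c₁ = 0) : deriv f c₂ ≠ 0 := by
  rcases lt_or_ge 0 c₁ with h₁ | h₁
  · exact hf.deriv_ne_zero_of_pos_of_lt hL hfa (fun x hx => hpos x ⟨hx.1, hx.2.trans hb⟩) ha h₁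
      hc hc₁
  rcases lt_or_ge c₂ 0 with h₂ | h₂
  · intro hc₂
    refine hf.comp_neg.deriv_ne_zero_of_pos_of_lt hL (a := -b) (c₁ := -c₂) (c₂ := -c₁)
      (by rwa [neg_neg]) (fun x hx => hpos (-x) ⟨by linarith [hx.2], by linarith [hx.1]⟩)
      (neg_lt_neg hb) (neg_pos.2 h₂) (neg_lt_neg hc) ?_ ?_ <;>
      rw [deriv_comp_neg, neg_neg, neg_eq_zero] <;> assumption
  intro hc₂
  have hs₁ := hf.sign_eta_eq_sign_of_deriv_eq_zero hL
    (fun x hx => hpos x (by rw [uIcc_of_ge h₁] at hx; exact ⟨ha.trans_le hx.1, by linarith [hx.2]⟩))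
    hc₁
  have hs₂ := hf.sign_eta_eq_sign_of_deriv_eq_zero hL
    (fun x hx => hpos x (by rw [uIcc_of_le h₂] at hx; exact ⟨by linarith [hx.1], hx.2.trans_lt hb⟩))
    hc₂
  rcases h₁.lt_or_eq with h₁ | rfl
  · have := sign_nonneg_iff.2 h₂
    rw [← hs₂, hs₁, sign_neg h₁] at this
    exact absurd this (by decide)
  · rw [_root_.sign_zero] at hs₁
    rw [sign_pos hc, hs₁] at hs₂
    exact absurd hs₂ (by decide)

theorem existsUnique_deriv_eq_zero (hf : IsCoulombSolution L η f) (hL : -1 < L) {a b : ℝ}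
    (hab : a < b) (hfa : f a = 0) (hfb : f b = 0) (hne : ∀ x ∈ Ioo a b, f x ≠ 0) :
    ∃! c, c ∈ Ioo a b ∧ deriv f c = 0 := by
  obtain ⟨c, hc, hfc⟩ :=
    exists_deriv_eq_zero hab hf.differentiable.continuous.continuousOn (hfa.trans hfb.symm)
  refine ⟨c, ⟨hc, hfc⟩, fun c' ⟨hc', hfc'⟩ => ?_⟩
  have huniq : ∀ g, IsCoulombSolution L η g → g a = 0 → g b = 0 → (∀ x ∈ Ioo a b, 0 < g x) →
      deriv g c = 0 → deriv g c' = 0 → c' = c := by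
    intro g hg hga hgb hpos hgc hgc'
    rcases lt_trichotomy c' c with h | h | h
    · exact absurd hgc (hg.deriv_ne_zero_of_lt hL hga hgb hpos hc'.1 h hc.2 hgc')
    · exact h
    · exact absurd hgc' (hg.deriv_ne_zero_of_lt hL hga hgb hpos hc.1 h hc'.2 hgc)
  rcases isPreconnected_Ioo.pos_or_neg_of_ne_zero hf.differentiable.continuous.continuousOn hne
    with hpos | hneg
  · exact huniq f hf hfa hfb hpos hfc hfc'
  · refine huniq (-f) hf.neg (by simp [hfa]) (by simp [hfb]) (fun x hx => by simpa using hneg x hx)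
      ?_ ?_ <;> simpa

end IsCoulombSolution

theorem coulombF_zero (L η : ℝ) : coulombF L η 0 = 1 := by
  rw [coulombF, tsum_eq_single 0 fun n hn => by simp [hn]]
  simp [coulombA]

variable {L : ℝ} (η : ℝ)

theorem coulombA_recurrence (hL : -1 < L) (n : ℕ) :
    ((n : ℝ) + 2) * ((n : ℝ) + 2 + 2 * L + 1) * coulombA L η (n + 2) =
      2 * η * coulombA L η (n + 1) - coulombA L η n := by
  have hd : ((n : ℝ) + 2) * ((n : ℝ) + 2 + 2 * L + 1) ≠ 0 := by
    have : (0 : ℝ) ≤ n := n.cast_nonneg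
    exact (mul_pos (by linarith) (by linarith)).ne'
  rw [coulombA, mul_div_cancel₀ _ hd]

theorem abs_coulombA_mul_factorial_le (hL : -1 < L) (n : ℕ) :
    |coulombA L η n| * n ! ≤ (1 + 2 * |η| + |η| / (L + 1)) ^ n := by
  -- `C` bounds `a₁`, and `C ^ 2 ≥ 2 |η| C + 1` drives the induction.
  set C := 1 + 2 * |η| + |η| / (L + 1)
  have hL1 : 0 < L + 1 := by linarith
  have hηC : 1 + 2 * |η| ≤ C := le_add_of_nonneg_right (by positivity)
  induction n using Nat.twoStepInduction with
  | zero => simp [coulombA]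
  | one =>
    rw [coulombA, abs_div, abs_of_pos hL1]
    simp only [factorial_one, cast_one, mul_one, pow_one]
    linarith [abs_nonneg η]
  | more n ih₀ ih₁ =>
    have hn : (0 : ℝ) ≤ n := n.cast_nonneg
    have hd : ((n : ℝ) + 2) * ((n : ℝ) + 1) ≤ ((n : ℝ) + 2) * ((n : ℝ) + 2 + 2 * L + 1) := by
      gcongr; linarith
    have ih₁' : |coulombA L η (n + 1)| * n ! ≤ C ^ (n + 1) := by
      refine le_trans ?_ ih₁
      gcongr
      omega
    calc |coulombA L η (n + 2)| * (n + 2)!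
        = |coulombA L η (n + 2)| * (((n : ℝ) + 2) * ((n : ℝ) + 1)) * n ! := by
          rw [factorial_succ, factorial_succ]; push_cast; ring
      _ ≤ |coulombA L η (n + 2)| * (((n : ℝ) + 2) * ((n : ℝ) + 2 + 2 * L + 1)) * n ! := by
          gcongr
      _ = |2 * η * coulombA L η (n + 1) - coulombA L η n| * n ! := by
          rw [← coulombA_recurrence η hL, abs_mul, abs_of_nonneg (hd.trans' (by positivity))]
          ring
      _ ≤ (2 * |η| * |coulombA L η (n + 1)| + |coulombA L η n|) * n ! := by
          gcongr
          refine (abs_sub _ _).trans_eq ?_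
          rw [abs_mul, abs_mul, abs_two]
      _ ≤ 2 * |η| * C ^ (n + 1) + C ^ n := by nlinarith [abs_nonneg η]
      _ = C ^ n * (2 * |η| * C + 1) := by ring
      _ ≤ C ^ n * (C * C) := by
          have hC : 0 ≤ C := by linarith [abs_nonneg η]
          gcongr
          nlinarith [abs_nonneg η]
      _ = C ^ (n + 2) := by ring

theorem factorialDecay_coulombA (hL : -1 < L) : FactorialDecay (coulombA L η) :=
  ⟨1, _, fun n => (abs_coulombA_mul_factorial_le η hL n).trans_eq (one_mul _).symm⟩

theorem isCoulombSolution_coulombF (hL : -1 < L) : IsCoulombSolution L η (coulombF L η) := by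
  set A := coulombA L η
  set B := derivCoeff A
  set B₂ := derivCoeff B
  have hA := factorialDecay_coulombA η hL
  have hd : deriv (coulombF L η) = fun x => ∑' n, B n * x ^ n :=
    funext fun x => (hA.hasDerivAt x).deriv
  have hd₂ : deriv (fun x => ∑' n, B n * x ^ n) = fun x => ∑' n, B₂ n * x ^ n :=
    funext fun x => (hA.derivCoeff.hasDerivAt x).deriv
  refine ⟨fun x => (hA.hasDerivAt x).differentiableAt, ?_, fun x => ?_⟩
  · rw [hd]; exact fun x => (hA.derivCoeff.hasDerivAt x).differentiableAt
  rw [hd, hd₂]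
  -- `t` expands `(2L + 2) 𝓕' - 2η 𝓕`; by the recurrence its tail expands `-x (𝓕'' + 𝓕)`.
  set t : ℕ → ℝ := fun n => ((2 * L + 2) * B n - 2 * η * A n) * x ^ n
  have ht : HasSum t ((2 * L + 2) * ∑' n, B n * x ^ n - 2 * η * ∑' n, A n * x ^ n) := by
    refine (((hA.derivCoeff.summable x).hasSum.mul_left (2 * L + 2)).sub
      ((hA.summable x).hasSum.mul_left (2 * η))).congr_fun fun n => ?_
    simp only [t]; ring
  have ht₀ : t 0 = 0 := by
    have hL1 : L + 1 ≠ 0 := by linarith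
    simp only [t, B, derivCoeff, A, coulombA]
    field_simp
    ring
  have htail : HasSum (fun n => t (n + 1))
      (-x * ((∑' n, B₂ n * x ^ n) + ∑' n, A n * x ^ n)) := by
    refine ((hA.derivCoeff.derivCoeff.summable x).hasSum.add
      (hA.summable x).hasSum).mul_left (-x) |>.congr_fun fun n => ?_
    simp only [t, B, derivCoeff]
    push_cast
    linear_combination (x ^ (n + 1)) * coulombA_recurrence η hL n
  have := ht.unique htail.zero_add
  rw [ht₀] at this
  rw [show coulombF L η x = ∑' n, A n * x ^ n from rfl]
  linear_combination this

end Coulomb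

/-- The zeros of `ρ ↦ F_L(η,ρ)` and of `ρ ↦ ρ F_L'(η,ρ) - (L+1) F_L(η,ρ)` are interlacing:
between any two consecutive zeros of the Coulomb wave function there is exactly one zero of
`∂𝓕_L/∂ρ(η,·)` (for positive arguments this is equivalent to the vanishing of
`ρ F_L'(η,ρ) - (L+1) F_L(η,ρ) = C_L(η) ρ^{L+2} ∂𝓕_L/∂ρ(η,ρ)`). -/
theorem coulomb_laguerre_zeros_interlacing (L η : ℝ) (hL : -1 < L) (a b : ℝ)
    (ha : a ∈ coulombZ L η) (hb : b ∈ coulombZ L η) (hab : a < b)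
    (hconsec : ∀ x ∈ coulombZ L η, x ∉ Set.Ioo a b) :
    ∃! c, c ∈ Set.Ioo a b ∧ deriv (coulombF L η) c = 0 := by
  refine (Coulomb.isCoulombSolution_coulombF η hL).existsUnique_deriv_eq_zero hL hab ha.2 hb.2
    fun x hx hfx => hconsec x ⟨?_, hfx⟩ hx
  rintro rfl
  simp [Coulomb.coulombF_zero] at hfx
end
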